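/- arXiv:0907.2820 — 6 statements merged into one kernel-verified Lean document; each statement's English description precedes it below -/
import Mathlib

section
/- Let μ be a σ-finite measure on a measurable space X, let N ≥ 1, and let f_1, …, f_N : X → ℂ be measurable functions belonging to L²(μ). Then ∫_{X^N} |det(f_i(x_j))_{1≤i,j≤N}|² dμ^{⊗N}(x_1,…,x_N) = N! · det G(μ), where G(μ) is the Gram matrix of the f_i with respect to μ. -/
/-!
Expanding `|det|² = det · conj det` by the Leibniz formula gives a double sum over permutations
`σ, τ` of signed products `∏ⱼ f (σ j) (x j) · conj (f (τ j) (x j))`, each of which integrates,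
by Fubini, to `∏ⱼ G (σ j) (τ j)`. For fixed `σ` the sum over `τ` is the determinant of `G` with
rows permuted by `σ`, i.e. `sign σ · det G`; so each of the `N!` permutations `σ` contributes
`det G`.
-/

open MeasureTheory Equiv ComplexConjugate

namespace Matrix

variable {n R : Type*} [Fintype n] [DecidableEq n] [CommRing R]

theorem sum_perm_sign_mul_sign_mul_prod (G : Matrix n n R) :
    ∑ σ : Perm n, ∑ τ : Perm n,
        ((Perm.sign σ : ℤ) : R) * (Perm.sign τ : ℤ) * ∏ j, G (σ j) (τ j) =
      (Fintype.card n).factorial * G.det := by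
  have row_perm (σ : Perm n) :
      ∑ τ : Perm n, ((Perm.sign τ : ℤ) : R) * ∏ j, G (σ j) (τ j) = Perm.sign σ * G.det := by
    rw [← det_permute, ← det_transpose, det_apply']
    rfl
  simp_rw [mul_assoc, ← Finset.mul_sum, row_perm, ← mul_assoc, ← Int.cast_mul, ← Units.val_mul,
    Int.units_mul_self, Units.val_one, Int.cast_one, one_mul, Finset.sum_const, Finset.card_univ,
    Fintype.card_perm, nsmul_eq_mul]

theorem det_mul_star_det [StarRing R] (M : Matrix n n R) :
    M.det * star M.det = ∑ σ : Perm n, ∑ τ : Perm n,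
      ((Perm.sign σ : ℤ) : R) * (Perm.sign τ : ℤ) * ∏ j, M (σ j) j * star (M (τ j) j) := by
  rw [← starRingEnd_apply, det_apply', map_sum, Finset.sum_mul_sum]
  refine Fintype.sum_congr _ _ fun σ => Fintype.sum_congr _ _ fun τ => ?_
  simp only [map_mul, map_intCast, map_prod, starRingEnd_apply, Finset.prod_mul_distrib]
  ring

end Matrix

section

variable {𝕜 X : Type*} [RCLike 𝕜] [MeasurableSpace X] {μ : Measure X}

theorem MeasureTheory.MemLp.integrable_mul_conj {f g : X → 𝕜} (hf : MemLp f 2 μ)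
    (hg : MemLp g 2 μ) :
    Integrable (fun y => f y * conj (g y)) μ :=
  hf.integrable_mul hg.star

theorem MeasureTheory.integral_pi_det_mul_conj_det [SigmaFinite μ] {n : Type*} [Fintype n]
    [DecidableEq n] (f : n → X → 𝕜) (hf : ∀ i j, Integrable (fun y => f i y * conj (f j y)) μ) :
    ∫ x : n → X, (Matrix.of fun i j => f i (x j)).det * conj (Matrix.of fun i j => f i (x j)).det
        ∂(Measure.pi fun _ => μ) =
      (Fintype.card n).factorial * (Matrix.of fun i j => ∫ y, f i y * conj (f j y) ∂μ).det := by
  have hprod (σ τ : Perm n) :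
      Integrable (fun x : n → X => ∏ j, f (σ j) (x j) * conj (f (τ j) (x j)))
        (Measure.pi fun _ => μ) :=
    Integrable.fintype_prod fun j => hf (σ j) (τ j)
  have fubini (σ τ : Perm n) :
      ∫ x : n → X, ∏ j, f (σ j) (x j) * conj (f (τ j) (x j)) ∂(Measure.pi fun _ => μ) =
        ∏ j, ∫ y, f (σ j) y * conj (f (τ j) y) ∂μ :=
    integral_fintype_prod_eq_prod fun j y => f (σ j) y * conj (f (τ j) y)
  simp_rw [starRingEnd_apply, Matrix.det_mul_star_det, Matrix.of_apply, ← starRingEnd_apply]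
  rw [integral_finsetSum _ fun σ _ => integrable_finsetSum _ fun τ _ => (hprod σ τ).const_mul _]
  simp_rw [integral_finsetSum _ fun τ _ => (hprod _ τ).const_mul _, integral_const_mul, fubini]
  simpa only [Matrix.of_apply] using
    Matrix.sum_perm_sign_mul_sign_mul_prod (Matrix.of fun i j => ∫ y, f i y * conj (f j y) ∂μ)

end

theorem stmt_1_general {X : Type*} [MeasurableSpace X] (μ : Measure X) [SigmaFinite μ]
    (N : ℕ) (f : Fin N → X → ℂ)
    (hL2 : ∀ i, MemLp (f i) 2 μ) :
    ((∫ x : Fin N → X, ‖(Matrix.of fun i j => f i (x j)).det‖ ^ 2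
        ∂(Measure.pi fun _ => μ) : ℝ) : ℂ) =
      (N.factorial : ℂ) *
        (Matrix.of fun i j => ∫ y, f i y * (starRingEnd ℂ) (f j y) ∂μ).det := by
  rw [← integral_complex_ofReal]
  simp_rw [Complex.ofReal_pow, ← Complex.mul_conj']
  simpa only [Fintype.card_fin] using
    integral_pi_det_mul_conj_det f fun i j => (hL2 i).integrable_mul_conj (hL2 j)

/-- The squared `L²(μ^{⊗N})` norm of the Vandermonde-type determinant
`(x₁,…,x_N) ↦ det (f i (x j))` equals `N!` times the determinant of the Gram matrix
of `f₁,…,f_N` with respect to `μ`. -/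
theorem stmt_1 {X : Type*} [MeasurableSpace X] (μ : Measure X) [SigmaFinite μ]
    (N : ℕ) (hN : 1 ≤ N) (f : Fin N → X → ℂ)
    (hmeas : ∀ i, Measurable (f i)) (hL2 : ∀ i, MemLp (f i) 2 μ) :
    ((∫ x : Fin N → X, ‖(Matrix.of fun i j => f i (x j)).det‖ ^ 2
        ∂(Measure.pi fun _ => μ) : ℝ) : ℂ) =
      (N.factorial : ℂ) *
        (Matrix.of fun i j => ∫ y, f i y * (starRingEnd ℂ) (f j y) ∂μ).det :=
  stmt_1_general μ N f hL2
end

section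
/- Let X be a measurable space, N ≥ 1, and let f_1, …, f_N : X → ℂ be measurable functions. Let μ_0 and μ_1 be finite measures on X such that each f_i lies in L²(μ_0) and in L²(μ_1). Then for every t ∈ [0,1], det G((1-t)μ_0 + tμ_1) ≥ (det G(μ_0))^{1-t} · (det G(μ_1))^t, where det G(μ) denotes the (real, nonnegative) determinant of the Gram matrix of the f_i with respect to μ. Equivalently, μ ↦ log det G(μ) is concave along segments of measures. -/
/-!
The Gram matrix of the `fᵢ` with respect to `μ` is the transpose of the Gram matrix of their
classes in `L²(μ)`, hence positive semidefinite, and it depends affinely on `μ`. The claim is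
therefore the log-concavity of the determinant on positive semidefinite matrices,
`det A ^ (1 - t) * det B ^ t ≤ det ((1 - t) A + t B)`. For singular `A` and `t < 1` the left side
vanishes. Otherwise, with `R = √A` and `C = R⁻¹ B R⁻¹`, both sides carry the factor `det A`, which
reduces the inequality to `A = 1`; diagonalising `C`, it becomes the weighted AM–GM inequality
`λ ^ t ≤ (1 - t) + t λ` for every eigenvalue `λ` of `C`.
-/

open MeasureTheory Matrix
open scoped ComplexOrder MatrixOrder

namespace Matrix

variable {n 𝕜 : Type*} [Fintype n] [DecidableEq n] [RCLike 𝕜]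

lemma IsHermitian.det_cfc {A : Matrix n n 𝕜} (hA : A.IsHermitian) (f : ℝ → ℝ) :
    (cfc f A).det = ∏ i, (f (hA.eigenvalues i) : 𝕜) := by
  simp [hA.cfc_eq, IsHermitian.cfc, -Unitary.conjStarAlgAut_apply]

lemma PosSemidef.re_det_rpow_le {C : Matrix n n 𝕜} (hC : C.PosSemidef) {t : ℝ}
    (ht0 : 0 ≤ t) (ht1 : t ≤ 1) :
    RCLike.re C.det ^ t ≤ RCLike.re ((1 - t) • (1 : Matrix n n 𝕜) + t • C).det := by
  -- in context, it discharges the self-adjointness autoparameters of the `cfc` lemmas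
  have hC_herm := hC.1
  have hcfc : cfc (fun x => (1 - t) + t * x) C = (1 - t) • (1 : Matrix n n 𝕜) + t • C := by
    rw [cfc_const_add (1 - t) (fun x => t * x) C, cfc_const_mul_id t C,
      Algebra.algebraMap_eq_smul_one]
  have hev := hC.eigenvalues_nonneg
  rw [← hcfc, hC_herm.det_cfc, hC_herm.det_eq_prod_eigenvalues, ← RCLike.ofReal_prod,
    ← RCLike.ofReal_prod, RCLike.ofReal_re, RCLike.ofReal_re,
    ← Real.finsetProd_rpow _ _ fun i _ => hev i]
  refine Finset.prod_le_prod (fun i _ => Real.rpow_nonneg (hev i) t) fun i _ => ?_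
  simpa using Real.geom_mean_le_arith_mean2_weighted (sub_nonneg.2 ht1) ht0 zero_le_one (hev i)
    (by ring)

lemma PosDef.re_det_rpow_mul_re_det_rpow_le {A B : Matrix n n 𝕜} (hA : A.PosDef)
    (hB : B.PosSemidef) {t : ℝ} (ht0 : 0 ≤ t) (ht1 : t ≤ 1) :
    RCLike.re A.det ^ (1 - t) * RCLike.re B.det ^ t ≤ RCLike.re ((1 - t) • A + t • B).det := by
  set R := CFC.sqrt A
  have hRR : R * R = A := CFC.sqrt_mul_sqrt_self A hA.posSemidef.nonneg
  have hRH : Rᴴ = R := (CFC.sqrt_nonneg A).posSemidef.1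
  have hR : IsUnit R.det :=
    (isUnit_iff_isUnit_det R).1 (isUnit_of_mul_isUnit_left (hRR ▸ hA.isUnit))
  set C := R⁻¹ * B * R⁻¹
  have hC : C.PosSemidef := by
    simpa [conjTranspose_nonsing_inv, hRH] using hB.mul_mul_conjTranspose_same R⁻¹
  have hB_eq : B = R * C * R := by
    simp only [C, ← Matrix.mul_assoc, mul_nonsing_inv _ hR, Matrix.one_mul,
      nonsing_inv_mul_cancel_right _ _ hR]
  have hS_eq : (1 - t) • A + t • B = R * ((1 - t) • 1 + t • C) * R := by
    rw [hB_eq, ← hRR]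
    simp only [Matrix.mul_add, Matrix.add_mul, Matrix.mul_smul, Matrix.smul_mul, Matrix.mul_one,
      Matrix.mul_assoc]
  have hdet_conj (M : Matrix n n 𝕜) : (R * M * R).det = A.det * M.det := by
    rw [det_mul, det_mul, ← hRR, det_mul]; ring
  obtain ⟨a, ha, hadet⟩ := RCLike.pos_iff_exists_ofReal.1 hA.det_pos
  have hc : 0 ≤ RCLike.re C.det := (RCLike.nonneg_iff.1 hC.det_nonneg).1
  rw [hS_eq, hB_eq, hdet_conj, hdet_conj, ← hadet, RCLike.re_ofReal_mul, RCLike.re_ofReal_mul,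
    RCLike.ofReal_re, Real.mul_rpow ha.le hc, ← mul_assoc, ← Real.rpow_add ha, sub_add_cancel,
    Real.rpow_one]
  exact mul_le_mul_of_nonneg_left (hC.re_det_rpow_le ht0 ht1) ha.le

theorem PosSemidef.re_det_rpow_mul_re_det_rpow_le {A B : Matrix n n 𝕜} (hA : A.PosSemidef)
    (hB : B.PosSemidef) {t : ℝ} (ht0 : 0 ≤ t) (ht1 : t ≤ 1) :
    RCLike.re A.det ^ (1 - t) * RCLike.re B.det ^ t ≤ RCLike.re ((1 - t) • A + t • B).det := by
  rcases ht1.eq_or_lt with rfl | ht1'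
  · simp
  by_cases hdet : A.det = 0
  · rw [hdet, map_zero, Real.zero_rpow (sub_pos.2 ht1').ne', zero_mul]
    exact (RCLike.nonneg_iff.1 ((hA.smul (sub_nonneg.2 ht1)).add (hB.smul ht0)).det_nonneg).1
  · exact (hA.posDef_iff_det_ne_zero.2 hdet).re_det_rpow_mul_re_det_rpow_le hB ht0 ht1

end Matrix

namespace MeasureTheory

variable {X ι 𝕜 : Type*} [MeasurableSpace X] [RCLike 𝕜]

noncomputable def gramMatrix (μ : Measure X) (f : ι → X → 𝕜) : Matrix ι ι 𝕜 :=
  Matrix.of fun i j => ∫ x, f i x * starRingEnd 𝕜 (f j x) ∂μ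

lemma MemLp.integrable_mul_conj_s6 {μ : Measure X} {g h : X → 𝕜} (hg : MemLp g 2 μ)
    (hh : MemLp h 2 μ) : Integrable (fun x => g x * starRingEnd 𝕜 (h x)) μ :=
  hg.integrable_mul hh.star

lemma gramMatrix_add_measure {μ ν : Measure X} {f : ι → X → 𝕜} (hμ : ∀ i, MemLp (f i) 2 μ)
    (hν : ∀ i, MemLp (f i) 2 ν) : gramMatrix (μ + ν) f = gramMatrix μ f + gramMatrix ν f := by
  ext i j
  exact integral_add_measure ((hμ i).integrable_mul_conj_s6 (hμ j))
    ((hν i).integrable_mul_conj_s6 (hν j))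

lemma gramMatrix_smul_measure (c : ENNReal) (μ : Measure X) (f : ι → X → 𝕜) :
    gramMatrix (c • μ) f = c.toReal • gramMatrix μ f := by
  ext i j
  exact integral_smul_measure _ c

lemma gramMatrix_eq_transpose_gram {μ : Measure X} {f : ι → X → 𝕜} (hf : ∀ i, MemLp (f i) 2 μ) :
    gramMatrix μ f = (Matrix.gram 𝕜 fun i => (hf i).toLp (f i))ᵀ := by
  ext i j
  rw [Matrix.transpose_apply, Matrix.gram_apply, L2.inner_def]
  refine integral_congr_ae ?_
  filter_upwards [(hf i).coeFn_toLp, (hf j).coeFn_toLp] with x hi hj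
  simp [hi, hj]

lemma posSemidef_gramMatrix [Finite ι] {μ : Measure X} {f : ι → X → 𝕜} (hf : ∀ i, MemLp (f i) 2 μ) :
    (gramMatrix μ f).PosSemidef := by
  rw [gramMatrix_eq_transpose_gram hf]
  exact (Matrix.posSemidef_gram 𝕜 _).transpose

end MeasureTheory

theorem stmt_6_general {X : Type*} [MeasurableSpace X] (N : ℕ) (f : Fin N → X → ℂ)
    (μ₀ μ₁ : Measure X) (h0 : ∀ i, MemLp (f i) 2 μ₀) (h1 : ∀ i, MemLp (f i) 2 μ₁) :
    ∀ t ∈ Set.Icc (0 : ℝ) 1,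
      ((Matrix.of fun i j => ∫ x, f i x * (starRingEnd ℂ) (f j x)
          ∂(ENNReal.ofReal (1 - t) • μ₀ + ENNReal.ofReal t • μ₁)).det).re ≥
        ((Matrix.of fun i j => ∫ x, f i x * (starRingEnd ℂ) (f j x) ∂μ₀).det).re ^ (1 - t) *
          ((Matrix.of fun i j => ∫ x, f i x * (starRingEnd ℂ) (f j x) ∂μ₁).det).re ^ t := by
  rintro t ⟨ht0, ht1⟩
  have hG : gramMatrix (ENNReal.ofReal (1 - t) • μ₀ + ENNReal.ofReal t • μ₁) f
      = (1 - t) • gramMatrix μ₀ f + t • gramMatrix μ₁ f := by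
    rw [gramMatrix_add_measure (fun i => (h0 i).smul_measure ENNReal.ofReal_ne_top)
      (fun i => (h1 i).smul_measure ENNReal.ofReal_ne_top), gramMatrix_smul_measure,
      gramMatrix_smul_measure, ENNReal.toReal_ofReal (sub_nonneg.2 ht1), ENNReal.toReal_ofReal ht0]
  have key := (posSemidef_gramMatrix h0).re_det_rpow_mul_re_det_rpow_le
    (posSemidef_gramMatrix h1) ht0 ht1
  rw [← hG] at key
  exact key

/-- Log-concavity of the Gram determinant along segments of measures: for finite
measures `μ₀, μ₁` and `t ∈ [0,1]`,
`det G((1-t)μ₀ + tμ₁) ≥ (det G(μ₀))^{1-t} (det G(μ₁))^t`. -/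
theorem stmt_6 {X : Type*} [MeasurableSpace X] (N : ℕ) (hN : 1 ≤ N)
    (f : Fin N → X → ℂ) (hmeas : ∀ i, Measurable (f i))
    (μ₀ μ₁ : Measure X) [IsFiniteMeasure μ₀] [IsFiniteMeasure μ₁]
    (h0 : ∀ i, MemLp (f i) 2 μ₀) (h1 : ∀ i, MemLp (f i) 2 μ₁) :
    ∀ t ∈ Set.Icc (0 : ℝ) 1,
      ((Matrix.of fun i j => ∫ x, f i x * (starRingEnd ℂ) (f j x)
          ∂(ENNReal.ofReal (1 - t) • μ₀ + ENNReal.ofReal t • μ₁)).det).re ≥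
        ((Matrix.of fun i j => ∫ x, f i x * (starRingEnd ℂ) (f j x) ∂μ₀).det).re ^ (1 - t) *
          ((Matrix.of fun i j => ∫ x, f i x * (starRingEnd ℂ) (f j x) ∂μ₁).det).re ^ t :=
  stmt_6_general N f μ₀ μ₁ h0 h1
end

section
/- Let μ be a finite measure on a measurable space X, let f_1, …, f_N : X → ℂ be bounded measurable functions that are linearly independent as elements of L²(μ), and let φ, v : X → ℝ be bounded measurable functions. For t ∈ ℝ let G(t) be the N×N matrix with entries G(t)_{ij} = ∫_X f_i · conj(f_j) · e^{-2(φ + t v)} dμ. Then det G(t) > 0 for every t ∈ ℝ and the function t ↦ log det G(t) is convex on ℝ. -/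
/-!
Positivity: `G(t)` is the Gram matrix of the `f i` in `L²(e^{-2(φ+tv)} μ)`; its quadratic form is
`a ↦ ∫ |∑ conj (a i) f i|² e^{-2(φ+tv)} dμ`, which vanishes only at `a = 0` by linear independence.

Convexity: by Andréief's identity,
`N! det G(t) = ∫_{X^N} |det (f i (y j))|² e^{-2 ∑ φ(y j)} e^{-2t ∑ v(y j)} dμ^N(y)`,
the Laplace transform of a nonnegative function, and such transforms are log-convex by Hölder's
inequality.
-/

open MeasureTheory Matrix ComplexConjugate Real
open scoped ComplexOrder

theorem MeasureTheory.measurePreserving_comp_perm {ι X : Type*} [Fintype ι] [MeasurableSpace X]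
    (μ : Measure X) [SigmaFinite μ] (τ : Equiv.Perm ι) :
    MeasurePreserving (fun y : ι → X => y ∘ τ) (Measure.pi fun _ => μ) (Measure.pi fun _ => μ) := by
  convert measurePreserving_piCongrLeft (fun _ => μ) τ.symm using 1
  ext y i
  simp [MeasurableEquiv.coe_piCongrLeft, Equiv.piCongrLeft_apply_eq_cast]

theorem MeasureTheory.integral_comp_perm {ι X E : Type*} [Fintype ι] [MeasurableSpace X]
    [NormedAddCommGroup E] [NormedSpace ℝ E] (μ : Measure X) [SigmaFinite μ]
    (τ : Equiv.Perm ι) (g : (ι → X) → E) :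
    ∫ y, g (y ∘ τ) ∂(Measure.pi fun _ => μ) = ∫ y, g y ∂(Measure.pi fun _ => μ) := by
  convert (measurePreserving_piCongrLeft (fun _ => μ) τ.symm).integral_comp' g using 3 with y
  congr 1
  ext i
  simp [MeasurableEquiv.coe_piCongrLeft, Equiv.piCongrLeft_apply_eq_cast]

namespace Matrix

variable {ι R X : Type*} [Fintype ι] [DecidableEq ι] [CommRing R]

theorem det_of_mul_prod_eq_sum (F G : ι → X → R) (y : ι → X) :
    (of fun i j => F i (y j)).det * ∏ i, G i (y i) =
      ∑ σ : Equiv.Perm ι, (Equiv.Perm.sign σ : R) * ∏ i, F (σ i) (y i) * G i (y i) := by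
  simp only [det_apply', Finset.sum_mul, of_apply, Finset.prod_mul_distrib, mul_assoc]

theorem sum_perm_det_of_comp_mul_prod (F G : ι → X → R) (y : ι → X) :
    ∑ τ : Equiv.Perm ι, (of fun i j => F i ((y ∘ τ) j)).det * ∏ i, G i ((y ∘ τ) i) =
      (of fun i j => F i (y j)).det * (of fun i j => G i (y j)).det := by
  have hcol : ∀ τ : Equiv.Perm ι, (of fun i j => F i ((y ∘ τ) j)) =
      (of fun i j => F i (y j)).submatrix id τ := fun τ => rfl
  rw [← det_transpose (of fun i j => G i (y j)), det_apply' (of fun i j => G i (y j))ᵀ,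
    Finset.mul_sum]
  refine Finset.sum_congr rfl fun τ _ => ?_
  rw [hcol, det_permute']
  simp only [transpose_apply, of_apply, Function.comp_apply]
  ring

end Matrix

section Andreief

variable {ι 𝕜 X : Type*} [Fintype ι] [DecidableEq ι] [RCLike 𝕜] [MeasurableSpace X]
  {μ : Measure X} [SigmaFinite μ] {F G : ι → X → 𝕜}

theorem integrable_det_of_mul_prod (hFG : ∀ i j, Integrable (fun x => F i x * G j x) μ) :
    Integrable (fun y : ι → X => (of fun i j => F i (y j)).det * ∏ i, G i (y i))
      (Measure.pi fun _ => μ) := by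
  simp_rw [det_of_mul_prod_eq_sum]
  exact integrable_finsetSum _ fun σ _ =>
    (Integrable.fintype_prod (f := fun i x => F (σ i) x * G i x) fun i => hFG _ _).const_mul _

theorem det_integral_mul_eq_integral_det_of_mul_prod
    (hFG : ∀ i j, Integrable (fun x => F i x * G j x) μ) :
    (of fun i j => ∫ x, F i x * G j x ∂μ).det =
      ∫ y : ι → X, (of fun i j => F i (y j)).det * ∏ i, G i (y i) ∂(Measure.pi fun _ => μ) := by
  simp_rw [det_of_mul_prod_eq_sum]
  rw [integral_finsetSum _ fun σ _ =>
    (Integrable.fintype_prod (f := fun i x => F (σ i) x * G i x) fun i => hFG _ _).const_mul _,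
    det_apply']
  refine Finset.sum_congr rfl fun σ _ => ?_
  rw [integral_const_mul, integral_fintype_prod_eq_prod (fun i x => F (σ i) x * G i x)]
  rfl

theorem integrable_det_mul_det (hFG : ∀ i j, Integrable (fun x => F i x * G j x) μ) :
    Integrable (fun y : ι → X => (of fun i j => F i (y j)).det * (of fun i j => G i (y j)).det)
      (Measure.pi fun _ => μ) := by
  simp_rw [← sum_perm_det_of_comp_mul_prod]
  exact integrable_finsetSum _ fun τ _ =>
    (measurePreserving_comp_perm μ τ).integrable_comp_of_integrable (integrable_det_of_mul_prod hFG)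

/-- Andréief's identity. -/
theorem card_factorial_mul_det_integral_mul_eq_integral_det_mul_det
    (hFG : ∀ i j, Integrable (fun x => F i x * G j x) μ) :
    ((Fintype.card ι).factorial : 𝕜) * (of fun i j => ∫ x, F i x * G j x ∂μ).det =
      ∫ y : ι → X, (of fun i j => F i (y j)).det * (of fun i j => G i (y j)).det
        ∂(Measure.pi fun _ => μ) := by
  set Φ : (ι → X) → 𝕜 := fun y => (of fun i j => F i (y j)).det * ∏ i, G i (y i)
  have hΦ : Integrable Φ (Measure.pi fun _ => μ) := integrable_det_of_mul_prod hFG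
  calc ((Fintype.card ι).factorial : 𝕜) * (of fun i j => ∫ x, F i x * G j x ∂μ).det
      = ((Fintype.card ι).factorial : 𝕜) * ∫ y, Φ y ∂(Measure.pi fun _ => μ) := by
        rw [det_integral_mul_eq_integral_det_of_mul_prod hFG]
    _ = ∑ τ : Equiv.Perm ι, ∫ y, Φ (y ∘ τ) ∂(Measure.pi fun _ => μ) := by
        simp only [integral_comp_perm, Finset.sum_const, Finset.card_univ, Fintype.card_perm,
          nsmul_eq_mul]
    _ = ∫ y, ∑ τ : Equiv.Perm ι, Φ (y ∘ τ) ∂(Measure.pi fun _ => μ) :=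
        (integral_finsetSum _ fun τ _ =>
          (measurePreserving_comp_perm μ τ).integrable_comp_of_integrable hΦ).symm
    _ = _ := by simp only [Φ, sum_perm_det_of_comp_mul_prod]

end Andreief

section Pointwise

variable {ι X : Type*} [Fintype ι]

theorem ofReal_normSq_sum_mul_eq_sum_sum (f : ι → X → ℂ) (w : X → ℝ) (a : ι → ℂ) (x : X) :
    ((Complex.normSq (∑ i, star (a i) * f i x) * w x : ℝ) : ℂ) =
      ∑ i, ∑ j, star (a i) * (f i x * conj (f j x) * (w x : ℂ)) * a j := by
  rw [Complex.ofReal_mul, ← Complex.mul_conj, map_sum, Finset.sum_mul_sum, Finset.sum_mul]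
  refine Finset.sum_congr rfl fun i _ => ?_
  rw [Finset.sum_mul]
  refine Finset.sum_congr rfl fun j _ => ?_
  simp only [map_mul, Complex.star_def, Complex.conj_conj]
  ring

variable [DecidableEq ι]

theorem det_of_conj_mul_ofReal (f : ι → X → ℂ) (w : X → ℝ) (y : ι → X) :
    (of fun i j => conj (f i (y j)) * (w (y j) : ℂ)).det =
      conj (of fun i j => f i (y j)).det * ∏ j, (w (y j) : ℂ) := by
  rw [RingHom.map_det, RingHom.mapMatrix_apply, mul_comm, ← det_mul_row]
  congr 1 with i j
  exact mul_comm _ _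

theorem mul_det_of_conj_mul_ofReal (f : ι → X → ℂ) (w : X → ℝ) (y : ι → X) :
    (of fun i j => f i (y j)).det * (of fun i j => conj (f i (y j)) * (w (y j) : ℂ)).det =
      ((‖(of fun i j => f i (y j)).det‖ ^ 2 * ∏ j, w (y j) : ℝ) : ℂ) := by
  rw [det_of_conj_mul_ofReal, ← mul_assoc, Complex.mul_conj, Complex.normSq_eq_norm_sq]
  push_cast
  rfl

end Pointwise

section WeightedGram

variable {ι X : Type*} [Fintype ι] [MeasurableSpace X] {μ : Measure X} {f : ι → X → ℂ}
  {w : X → ℝ}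

theorem integrable_ofReal_normSq_sum_mul
    (hint : ∀ i j, Integrable (fun x => f i x * conj (f j x) * (w x : ℂ)) μ) (a : ι → ℂ) :
    Integrable (fun x => ((Complex.normSq (∑ i, star (a i) * f i x) * w x : ℝ) : ℂ)) μ := by
  simp_rw [ofReal_normSq_sum_mul_eq_sum_sum]
  exact integrable_finsetSum _ fun i _ => integrable_finsetSum _ fun j _ =>
    ((hint i j).const_mul _).mul_const _

theorem star_dotProduct_weightedGram_mulVec
    (hint : ∀ i j, Integrable (fun x => f i x * conj (f j x) * (w x : ℂ)) μ) (a : ι → ℂ) :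
    star a ⬝ᵥ ((of fun i j => ∫ x, f i x * conj (f j x) * (w x : ℂ) ∂μ) *ᵥ a) =
      ∫ x, ((Complex.normSq (∑ i, star (a i) * f i x) * w x : ℝ) : ℂ) ∂μ := by
  simp_rw [ofReal_normSq_sum_mul_eq_sum_sum]
  rw [integral_finsetSum _ fun i _ => integrable_finsetSum _ fun j _ =>
    ((hint i j).const_mul _).mul_const _]
  refine Finset.sum_congr rfl fun i _ => ?_
  rw [integral_finsetSum _ fun j _ => ((hint i j).const_mul _).mul_const _, mulVec,
    dotProduct, Finset.mul_sum]
  refine Finset.sum_congr rfl fun j _ => ?_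
  rw [integral_mul_const, integral_const_mul, of_apply, mul_assoc, Pi.star_apply]

theorem posDef_weightedGram (hw : ∀ᵐ x ∂μ, 0 < w x)
    (hint : ∀ i j, Integrable (fun x => f i x * conj (f j x) * (w x : ℂ)) μ)
    (hind : ∀ a : ι → ℂ, (∀ᵐ x ∂μ, ∑ i, a i * f i x = 0) → a = 0) :
    (of fun i j => ∫ x, f i x * conj (f j x) * (w x : ℂ) ∂μ).PosDef := by
  refine posDef_iff_dotProduct_mulVec.2 ⟨?_, fun a ha => ?_⟩
  · ext i j
    rw [conjTranspose_apply, of_apply, of_apply, Complex.star_def, ← integral_conj]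
    congr 1 with x
    simp only [map_mul, Complex.conj_conj, Complex.conj_ofReal]
    ring
  rw [star_dotProduct_weightedGram_mulVec hint, integral_complex_ofReal, Complex.zero_lt_real]
  set g : X → ℂ := fun x => ∑ i, star (a i) * f i x
  have hnonneg : 0 ≤ᵐ[μ] fun x => Complex.normSq (g x) * w x := by
    filter_upwards [hw] with x hx using mul_nonneg (Complex.normSq_nonneg _) hx.le
  have hint_normSq : Integrable (fun x => Complex.normSq (g x) * w x) μ := by
    simpa only [RCLike.re_to_complex, Complex.ofReal_re] using
      (integrable_ofReal_normSq_sum_mul hint a).re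
  refine (integral_nonneg_of_ae hnonneg).lt_of_ne fun h0 => ha ?_
  have hg : ∀ᵐ x ∂μ, g x = 0 := by
    filter_upwards [(integral_eq_zero_iff_of_nonneg_ae hnonneg hint_normSq).1 h0.symm, hw]
      with x hx hwx
    exact Complex.normSq_eq_zero.1 ((mul_eq_zero.1 hx).resolve_right hwx.ne')
  exact star_eq_zero.1 (hind _ hg)

variable [DecidableEq ι] [SigmaFinite μ]

theorem integrable_norm_det_sq_mul_prod
    (hint : ∀ i j, Integrable (fun x => f i x * conj (f j x) * (w x : ℂ)) μ) :
    Integrable (fun y : ι → X => ‖(of fun i j => f i (y j)).det‖ ^ 2 * ∏ j, w (y j))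
      (Measure.pi fun _ => μ) := by
  have hFG : ∀ i j, Integrable (fun x => f i x * (conj (f j x) * (w x : ℂ))) μ := by
    simpa only [mul_assoc] using hint
  have h := (integrable_det_mul_det hFG).re
  simp_rw [mul_det_of_conj_mul_ofReal] at h
  simpa only [RCLike.re_to_complex, Complex.ofReal_re] using h

theorem det_weightedGram_eq
    (hint : ∀ i j, Integrable (fun x => f i x * conj (f j x) * (w x : ℂ)) μ) :
    (of fun i j => ∫ x, f i x * conj (f j x) * (w x : ℂ) ∂μ).det =
      (((Fintype.card ι).factorial : ℝ)⁻¹ *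
        ∫ y : ι → X, ‖(of fun i j => f i (y j)).det‖ ^ 2 * ∏ j, w (y j)
          ∂(Measure.pi fun _ => μ) : ℝ) := by
  have hFG : ∀ i j, Integrable (fun x => f i x * (conj (f j x) * (w x : ℂ))) μ := by
    simpa only [mul_assoc] using hint
  have h := card_factorial_mul_det_integral_mul_eq_integral_det_mul_det hFG
  simp_rw [mul_det_of_conj_mul_ofReal, integral_complex_ofReal, ← mul_assoc] at h
  have hN : ((Fintype.card ι).factorial : ℂ) ≠ 0 := Nat.cast_ne_zero.2 (Nat.factorial_ne_zero _)
  rw [Complex.ofReal_mul, Complex.ofReal_inv, Complex.ofReal_natCast, eq_inv_mul_iff_mul_eq₀ hN,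
    h]

end WeightedGram

theorem integrable_mul_conj_mul_ofReal {X : Type*} [MeasurableSpace X] {μ : Measure X}
    [IsFiniteMeasure μ] {f g : X → ℂ} {w : X → ℝ} (hf : Measurable f) (hg : Measurable g)
    (hw : Measurable w) (hfb : ∃ C, ∀ x, ‖f x‖ ≤ C) (hgb : ∃ C, ∀ x, ‖g x‖ ≤ C)
    (hwb : ∃ C, ∀ x, |w x| ≤ C) : Integrable (fun x => f x * conj (g x) * (w x : ℂ)) μ := by
  obtain ⟨Cf, hCf⟩ := hfb
  obtain ⟨Cg, hCg⟩ := hgb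
  obtain ⟨Cw, hCw⟩ := hwb
  refine Integrable.of_bound (by fun_prop) (Cf * Cg * Cw) (ae_of_all _ fun x => ?_)
  rw [norm_mul, norm_mul, Complex.norm_conj, Complex.norm_real, Real.norm_eq_abs]
  have := (norm_nonneg _).trans (hCf x)
  have := (norm_nonneg _).trans (hCg x)
  gcongr
  exacts [hCf x, hCg x, hCw x]

theorem Real.mul_exp_convexComb_eq_rpow_mul_rpow {c : ℝ} (hc : 0 ≤ c) {a b : ℝ} (hab : a + b = 1)
    (p q s : ℝ) :
    c * exp ((a * p + b * q) * s) = (c * exp (p * s)) ^ a * (c * exp (q * s)) ^ b := by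
  rw [mul_rpow hc (exp_pos _).le, mul_rpow hc (exp_pos _).le, ← exp_mul, ← exp_mul,
    mul_mul_mul_comm, ← rpow_add' hc (by rw [hab]; exact one_ne_zero), hab, rpow_one,
    ← exp_add]
  ring_nf

section LogConvex

variable {α : Type*} [MeasurableSpace α] {μ : Measure α} {h V : α → ℝ}

theorem integral_mul_exp_convexComb_le (hh : 0 ≤ h)
    (hint : ∀ t, Integrable (fun x => h x * exp (t * V x)) μ) {a b : ℝ} (ha : 0 ≤ a)
    (hb : 0 ≤ b) (hab : a + b = 1) (p q : ℝ) :
    ∫ x, h x * exp ((a * p + b * q) * V x) ∂μ ≤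
      (∫ x, h x * exp (p * V x) ∂μ) ^ a * (∫ x, h x * exp (q * V x) ∂μ) ^ b := by
  have hnn : ∀ t x, 0 ≤ h x * exp (t * V x) := fun t x => mul_nonneg (hh x) (exp_pos _).le
  have hofReal : ∀ t, ENNReal.ofReal (∫ x, h x * exp (t * V x) ∂μ) =
      ∫⁻ x, ENNReal.ofReal (h x * exp (t * V x)) ∂μ := fun t =>
    ofReal_integral_eq_lintegral_ofReal (hint t) (ae_of_all _ (hnn t))
  have holder := ENNReal.lintegral_mul_norm_pow_le (hint p).aemeasurable.ennreal_ofReal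
    (hint q).aemeasurable.ennreal_ofReal ha hb hab
  rw [← ENNReal.ofReal_le_ofReal_iff (mul_nonneg (rpow_nonneg (integral_nonneg (hnn p)) a)
      (rpow_nonneg (integral_nonneg (hnn q)) b)),
    ENNReal.ofReal_mul (rpow_nonneg (integral_nonneg (hnn p)) a),
    ← ENNReal.ofReal_rpow_of_nonneg (integral_nonneg (hnn p)) ha,
    ← ENNReal.ofReal_rpow_of_nonneg (integral_nonneg (hnn q)) hb, hofReal, hofReal, hofReal]
  refine le_of_eq_of_le (lintegral_congr fun x => ?_) holder
  rw [mul_exp_convexComb_eq_rpow_mul_rpow (hh x) hab, ENNReal.ofReal_mul (rpow_nonneg (hnn p x) a),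
    ENNReal.ofReal_rpow_of_nonneg (hnn p x) ha, ENNReal.ofReal_rpow_of_nonneg (hnn q x) hb]

theorem convexOn_log_integral_mul_exp (hh : 0 ≤ h)
    (hint : ∀ t, Integrable (fun x => h x * exp (t * V x)) μ)
    (hpos : ∀ t, 0 < ∫ x, h x * exp (t * V x) ∂μ) :
    ConvexOn ℝ Set.univ fun t => log (∫ x, h x * exp (t * V x) ∂μ) := by
  refine ⟨convex_univ, fun p _ q _ a b ha hb hab => ?_⟩
  calc log (∫ x, h x * exp ((a • p + b • q) * V x) ∂μ)
      ≤ log ((∫ x, h x * exp (p * V x) ∂μ) ^ a * (∫ x, h x * exp (q * V x) ∂μ) ^ b) :=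
        log_le_log (hpos _) (integral_mul_exp_convexComb_le hh hint ha hb hab p q)
    _ = a • log (∫ x, h x * exp (p * V x) ∂μ) + b • log (∫ x, h x * exp (q * V x) ∂μ) := by
        rw [log_mul (rpow_pos_of_pos (hpos p) a).ne' (rpow_pos_of_pos (hpos q) b).ne',
          log_rpow (hpos p), log_rpow (hpos q), smul_eq_mul, smul_eq_mul]

end LogConvex

theorem prod_exp_neg_two_mul_add_mul {ι : Type*} [Fintype ι] (φ v : ι → ℝ) (t : ℝ) :
    ∏ j, exp (-2 * (φ j + t * v j)) = exp (-2 * ∑ j, φ j) * exp (t * (-2 * ∑ j, v j)) := by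
  rw [← exp_sum, ← exp_add, Finset.mul_sum, Finset.mul_sum, Finset.mul_sum,
    ← Finset.sum_add_distrib]
  exact congrArg exp (Finset.sum_congr rfl fun j _ => by ring)

theorem exists_abs_exp_neg_two_mul_le {X : Type*} {φ v : X → ℝ} (hφb : ∃ C, ∀ x, |φ x| ≤ C)
    (hvb : ∃ C, ∀ x, |v x| ≤ C) (t : ℝ) :
    ∃ C, ∀ x, |exp (-2 * (φ x + t * v x))| ≤ C := by
  obtain ⟨Cφ, hCφ⟩ := hφb
  obtain ⟨Cv, hCv⟩ := hvb
  refine ⟨exp (2 * (Cφ + |t| * Cv)), fun x => ?_⟩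
  rw [abs_of_pos (exp_pos _), exp_le_exp]
  calc -2 * (φ x + t * v x) ≤ 2 * |φ x + t * v x| := by linarith [neg_abs_le (φ x + t * v x)]
    _ ≤ 2 * (|φ x| + |t| * |v x|) := by rw [← abs_mul]; gcongr; exact abs_add_le _ _
    _ ≤ 2 * (Cφ + |t| * Cv) := by gcongr; exacts [hCφ x, hCv x]

theorem stmt_8_general {X : Type*} [MeasurableSpace X] (μ : Measure X) [IsFiniteMeasure μ]
    (N : ℕ) (f : Fin N → X → ℂ)
    (hmeas : ∀ i, Measurable (f i)) (hfb : ∀ i, ∃ C, ∀ x, ‖f i x‖ ≤ C)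
    (φ v : X → ℝ) (hφm : Measurable φ) (hvm : Measurable v)
    (hφb : ∃ C, ∀ x, |φ x| ≤ C) (hvb : ∃ C, ∀ x, |v x| ≤ C)
    (hind : ∀ a : Fin N → ℂ, (∀ᵐ x ∂μ, ∑ i, a i * f i x = 0) → a = 0) :
    (∀ t : ℝ, 0 < ((Matrix.of fun i j =>
        ∫ x, f i x * (starRingEnd ℂ) (f j x) *
          (Real.exp (-2 * (φ x + t * v x)) : ℂ) ∂μ).det).re) ∧
      ConvexOn ℝ Set.univ (fun t : ℝ => Real.log ((Matrix.of fun i j =>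
        ∫ x, f i x * (starRingEnd ℂ) (f j x) *
          (Real.exp (-2 * (φ x + t * v x)) : ℂ) ∂μ).det).re) := by
  have hint (t : ℝ) (i j : Fin N) := integrable_mul_conj_mul_ofReal (μ := μ) (hmeas i) (hmeas j)
    (by fun_prop) (hfb i) (hfb j) (exists_abs_exp_neg_two_mul_le hφb hvb t)
  have hpos (t : ℝ) := (Complex.pos_iff.1
    (posDef_weightedGram (ae_of_all _ fun x => exp_pos _) (hint t) hind).det_pos).1
  refine ⟨hpos, ?_⟩
  set h : (Fin N → X) → ℝ := fun y =>
    ‖(of fun i j => f i (y j)).det‖ ^ 2 * exp (-2 * ∑ j, φ (y j))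
  set V : (Fin N → X) → ℝ := fun y => -2 * ∑ j, v (y j)
  have hprod (t : ℝ) (y : Fin N → X) : ‖(of fun i j => f i (y j)).det‖ ^ 2 *
      ∏ j, exp (-2 * (φ (y j) + t * v (y j))) = h y * exp (t * V y) := by
    rw [prod_exp_neg_two_mul_add_mul, mul_assoc]
  have hre (t : ℝ) : ((of fun i j => ∫ x, f i x * (starRingEnd ℂ) (f j x) *
      (Real.exp (-2 * (φ x + t * v x)) : ℂ) ∂μ).det).re =
      (N.factorial : ℝ)⁻¹ * ∫ y, h y * exp (t * V y) ∂(Measure.pi fun _ => μ) := by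
    simp_rw [det_weightedGram_eq (hint t), Complex.ofReal_re, Fintype.card_fin, hprod]
  have hIint (t : ℝ) : Integrable (fun y => h y * exp (t * V y)) (Measure.pi fun _ => μ) := by
    simpa only [hprod] using integrable_norm_det_sq_mul_prod (hint t)
  have hIpos (t : ℝ) : 0 < ∫ y, h y * exp (t * V y) ∂(Measure.pi fun _ => μ) :=
    pos_of_mul_pos_right (hre t ▸ hpos t) (inv_nonneg.2 (Nat.cast_nonneg _))
  refine ((convexOn_log_integral_mul_exp (fun y => by positivity) hIint hIpos).add_const
    (log (N.factorial : ℝ)⁻¹)).congr fun t _ => ?_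
  rw [Pi.add_apply, hre, log_mul (inv_pos.2 (Nat.cast_pos.2 N.factorial_pos)).ne' (hIpos t).ne',
    add_comm]

/-- Positivity of the weighted Gram determinant and convexity of its logarithm
along affine paths of weights `φ + t v`. -/
theorem stmt_8 {X : Type*} [MeasurableSpace X] (μ : Measure X) [IsFiniteMeasure μ]
    (N : ℕ) (hN : 1 ≤ N) (f : Fin N → X → ℂ)
    (hmeas : ∀ i, Measurable (f i)) (hfb : ∀ i, ∃ C, ∀ x, ‖f i x‖ ≤ C)
    (φ v : X → ℝ) (hφm : Measurable φ) (hvm : Measurable v)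
    (hφb : ∃ C, ∀ x, |φ x| ≤ C) (hvb : ∃ C, ∀ x, |v x| ≤ C)
    (hind : ∀ a : Fin N → ℂ, (∀ᵐ x ∂μ, ∑ i, a i * f i x = 0) → a = 0) :
    (∀ t : ℝ, 0 < ((Matrix.of fun i j =>
        ∫ x, f i x * (starRingEnd ℂ) (f j x) *
          (Real.exp (-2 * (φ x + t * v x)) : ℂ) ∂μ).det).re) ∧
      ConvexOn ℝ Set.univ (fun t : ℝ => Real.log ((Matrix.of fun i j =>
        ∫ x, f i x * (starRingEnd ℂ) (f j x) *
          (Real.exp (-2 * (φ x + t * v x)) : ℂ) ∂μ).det).re) :=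
  stmt_8_general μ N f hmeas hfb φ v hφm hvm hφb hvb hind
end

section
/- Let μ be a finite measure on a measurable space X, let φ, v : X → ℝ be bounded measurable functions, and let f_1, …, f_N : X → ℂ be bounded measurable functions that are orthonormal in L²(e^{-2φ}μ), i.e. ∫_X f_i · conj(f_j) · e^{-2φ} dμ = δ_{ij}. For t ∈ ℝ let G(t) be the N×N matrix with entries G(t)_{ij} = ∫_X f_i · conj(f_j) · e^{-2(φ + t v)} dμ. Then the function t ↦ log det G(t) is differentiable at t = 0 with derivative equal to −2 ∫_X v(x) · (∑_{i=1}^N |f_i(x)|²) · e^{-2φ(x)} dμ(x). -/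
/-!
By Jacobi's formula, since `G(0)` is the identity the derivative of `det G` at `0` is the trace
of `G'(0)`, and `log` has derivative `1` at `1`. Each entry of `G` is differentiated under the
integral sign: with `v` and `φ` bounded, `∂ₜ e^{-2(φ + t v)} = -2 v e^{-2(φ + t v)}` is dominated
uniformly for `t` near `0` by a constant multiple of `e^{-2φ}`, so `G'(0)ᵢᵢ = -2 ∫ v |fᵢ|² e^{-2φ}`.
-/

open MeasureTheory Finset Equiv

namespace Matrix

variable {n : Type*} [Fintype n] [DecidableEq n]

theorem prod_erase_one_apply_perm_eq_zero {R : Type*} [CommRing R] {σ : Perm n} (hσ : σ ≠ 1)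
    (k : n) :
    ∏ j ∈ univ.erase k, (1 : Matrix n n R) (σ j) j = 0 := by
  obtain ⟨j, hj, hjk⟩ := exists_mem_ne (Perm.two_le_card_support_of_ne_one hσ) k
  exact prod_eq_zero (mem_erase.2 ⟨hjk, mem_univ j⟩) (one_apply_ne (Perm.mem_support.1 hj))

/-- Jacobi's formula at the identity. -/
theorem hasDerivAt_det_of_eq_one {𝕜 𝔸 : Type*} [NontriviallyNormedField 𝕜] [NormedCommRing 𝔸]
    [NormedAlgebra 𝕜 𝔸] {M : 𝕜 → Matrix n n 𝔸} {M' : Matrix n n 𝔸} {t₀ : 𝕜}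
    (hM : ∀ i j, HasDerivAt (fun t => M t i j) (M' i j) t₀) (hM₀ : M t₀ = 1) :
    HasDerivAt (fun t => (M t).det) M'.trace t₀ := by
  simp only [det_apply]
  have hterm : ∀ σ : Perm n, HasDerivAt (fun t => Perm.sign σ • ∏ i, M t (σ i) i)
      (Perm.sign σ • ∑ k, (∏ j ∈ univ.erase k, M t₀ (σ j) j) • M' (σ k) k) t₀ :=
    fun σ => (HasDerivAt.fun_finsetProd fun k _ => hM (σ k) k).const_smul _
  refine (HasDerivAt.fun_sum fun σ _ => hterm σ).congr_deriv ?_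
  rw [sum_eq_single (1 : Perm n)]
  · simp [hM₀, trace]
  · intro σ _ hσ
    simp [hM₀, prod_erase_one_apply_perm_eq_zero hσ]
  · simp

end Matrix

theorem HasDerivAt.log_re_of_eq_one {f : ℝ → ℂ} {f' : ℂ} {t₀ : ℝ} (hf : HasDerivAt f f' t₀)
    (hf₀ : f t₀ = 1) : HasDerivAt (fun t => Real.log (f t).re) f'.re t₀ := by
  have hre : HasDerivAt (fun t => (f t).re) f'.re t₀ := by
    simpa [Function.comp_def] using Complex.reCLM.hasFDerivAt.comp_hasDerivAt t₀ hf
  simpa [hf₀] using hre.log (by simp [hf₀])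

theorem mul_le_mul_of_abs_le {a t T C : ℝ} (ha : |a| ≤ C) (ht : |t| ≤ T) : t * a ≤ T * C :=
  calc t * a ≤ |t| * |a| := abs_mul t a ▸ le_abs_self _
    _ ≤ T * C := mul_le_mul ht ha (abs_nonneg a) ((abs_nonneg t).trans ht)

theorem abs_mul_exp_mul_le {a t T C : ℝ} (ha : |a| ≤ C) (ht : |t| ≤ T) :
    |a * Real.exp (t * a)| ≤ C * Real.exp (T * C) := by
  rw [abs_mul, abs_of_pos (Real.exp_pos _)]
  exact mul_le_mul ha (Real.exp_le_exp.2 (mul_le_mul_of_abs_le ha ht)) (Real.exp_pos _).le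
    ((abs_nonneg a).trans ha)

section Integral

variable {X : Type*} [MeasurableSpace X] {μ : Measure X}

theorem hasDerivAt_integral_exp_mul_smul {E : Type*} [NormedAddCommGroup E] [NormedSpace ℝ E]
    {h : X → E} (hh : Integrable h μ) {v : X → ℝ}
    (hv : AEStronglyMeasurable v μ) {C : ℝ} (hvC : ∀ x, |v x| ≤ C) (t₀ : ℝ) :
    HasDerivAt (fun t => ∫ x, Real.exp (t * v x) • h x ∂μ)
      (∫ x, (v x * Real.exp (t₀ * v x)) • h x ∂μ) t₀ := by
  have hexp_meas : ∀ t, AEStronglyMeasurable (fun x => Real.exp (t * v x)) μ := fun t =>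
    Real.continuous_exp.comp_aestronglyMeasurable (hv.const_mul t)
  have hderiv_le : ∀ x, ∀ t ∈ Metric.ball t₀ 1,
      ‖(v x * Real.exp (t * v x)) • h x‖ ≤ C * Real.exp ((|t₀| + 1) * C) * ‖h x‖ := by
    intro x t ht
    have ht' : |t| ≤ |t₀| + 1 := by
      have := abs_sub_abs_le_abs_sub t t₀
      rw [Metric.mem_ball, Real.dist_eq] at ht
      linarith
    rw [norm_smul, Real.norm_eq_abs]
    exact mul_le_mul_of_nonneg_right (abs_mul_exp_mul_le (hvC x) ht') (norm_nonneg _)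
  refine (hasDerivAt_integral_of_dominated_loc_of_deriv_le (Metric.ball_mem_nhds t₀ one_pos)
    (.of_forall fun t => (hexp_meas t).smul hh.1) ?_ ((hv.mul (hexp_meas t₀)).smul hh.1)
    (.of_forall hderiv_le) (hh.norm.const_mul _) (.of_forall fun x t _ => ?_)).2
  · refine hh.bdd_smul (Real.exp (|t₀| * C)) (hexp_meas t₀) (.of_forall fun x => ?_)
    rw [Real.norm_of_nonneg (Real.exp_pos _).le]
    exact Real.exp_le_exp.2 (mul_le_mul_of_abs_le (hvC x) le_rfl)
  · simpa [mul_comm] using (((hasDerivAt_id t).mul_const (v x)).exp.smul_const (h x))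

theorem re_sum_integral_mul_conj_mul_ofReal {ι : Type*} (s : Finset ι) {f : ι → X → ℂ}
    {c : X → ℝ}
    (hint : ∀ k ∈ s, Integrable (fun x => f k x * starRingEnd ℂ (f k x) * (c x : ℂ)) μ) :
    (∑ k ∈ s, ∫ x, f k x * starRingEnd ℂ (f k x) * (c x : ℂ) ∂μ).re =
      ∫ x, (∑ k ∈ s, ‖f k x‖ ^ 2) * c x ∂μ := by
  rw [← integral_finsetSum s hint]
  have hpointwise : ∀ x, ∑ k ∈ s, f k x * starRingEnd ℂ (f k x) * (c x : ℂ) =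
      (((∑ k ∈ s, ‖f k x‖ ^ 2) * c x : ℝ) : ℂ) := fun x => by
    push_cast
    simp only [Complex.mul_conj, Complex.normSq_eq_norm_sq, Complex.ofReal_pow, sum_mul]
  simp only [hpointwise]
  rw [integral_complex_ofReal, Complex.ofReal_re]

theorem integrable_mul_conj_mul_ofReal_s9 [IsFiniteMeasure μ] {a b : X → ℂ} {c : X → ℝ}
    (ha : AEStronglyMeasurable a μ) (hb : AEStronglyMeasurable b μ)
    (hc : AEStronglyMeasurable c μ) {Ca Cb Cc : ℝ}
    (haC : ∀ x, ‖a x‖ ≤ Ca) (hbC : ∀ x, ‖b x‖ ≤ Cb) (hcC : ∀ x, |c x| ≤ Cc) :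
    Integrable (fun x => a x * starRingEnd ℂ (b x) * (c x : ℂ)) μ :=
  ((Integrable.of_bound ha Ca (.of_forall haC)).mul_bdd
      (Complex.continuous_conj.comp_aestronglyMeasurable hb) (c := Cb)
      (.of_forall fun x => by simpa using hbC x)).mul_bdd
    (Complex.continuous_ofReal.comp_aestronglyMeasurable hc) (c := Cc)
    (.of_forall fun x => by simpa using hcC x)

theorem hasDerivAt_integral_mul_exp_neg_two_mul {g : X → ℂ} {φ v : X → ℝ}
    (hg : Integrable (fun x => g x * (Real.exp (-2 * φ x) : ℂ)) μ)
    (hv : AEStronglyMeasurable v μ) {C : ℝ} (hvC : ∀ x, |v x| ≤ C) :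
    HasDerivAt (fun t : ℝ => ∫ x, g x * (Real.exp (-2 * (φ x + t * v x)) : ℂ) ∂μ)
      (∫ x, g x * ((-2 * v x * Real.exp (-2 * φ x) : ℝ) : ℂ) ∂μ) 0 := by
  have hv' : ∀ x, |-2 * v x| ≤ 2 * C := fun x => by
    rw [abs_mul, abs_neg, abs_two]
    linarith [hvC x]
  refine ((hasDerivAt_integral_exp_mul_smul hg (hv.const_mul (-2)) hv' 0).congr_deriv ?_)
    |>.congr_of_eventuallyEq (.of_forall fun t => integral_congr_ae (.of_forall fun x => ?_))
  · refine integral_congr_ae (.of_forall fun x => ?_)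
    dsimp only
    rw [zero_mul, Real.exp_zero, mul_one, Complex.real_smul]
    push_cast
    ring
  · dsimp only
    rw [show -2 * (φ x + t * v x) = t * (-2 * v x) + -2 * φ x by ring, Real.exp_add,
      Complex.real_smul]
    push_cast
    ring

end Integral

theorem stmt_9_general {X : Type*} [MeasurableSpace X] (μ : Measure X) [IsFiniteMeasure μ]
    (N : ℕ)
    (φ v : X → ℝ) (hφm : Measurable φ) (hvm : Measurable v)
    (hφb : ∃ C, ∀ x, |φ x| ≤ C) (hvb : ∃ C, ∀ x, |v x| ≤ C)
    (f : Fin N → X → ℂ)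
    (hmeas : ∀ i, Measurable (f i)) (hfb : ∀ i, ∃ C, ∀ x, ‖f i x‖ ≤ C)
    (horth : ∀ i j, ∫ x, f i x * (starRingEnd ℂ) (f j x) * (Real.exp (-2 * φ x) : ℂ) ∂μ =
      if i = j then 1 else 0) :
    HasDerivAt (fun t : ℝ => Real.log ((Matrix.of fun i j =>
        ∫ x, f i x * (starRingEnd ℂ) (f j x) *
          (Real.exp (-2 * (φ x + t * v x)) : ℂ) ∂μ).det).re)
      (-2 * ∫ x, v x * (∑ i, ‖f i x‖ ^ 2) * Real.exp (-2 * φ x) ∂μ) 0 := by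
  obtain ⟨Cφ, hCφ⟩ := hφb
  obtain ⟨Cv, hCv⟩ := hvb
  choose Cf hCf using hfb
  have hw : ∀ x, |Real.exp (-2 * φ x)| ≤ Real.exp (2 * Cφ) := fun x => by
    rw [abs_of_pos (Real.exp_pos _)]
    exact Real.exp_le_exp.2 (mul_le_mul_of_abs_le (hCφ x) (by norm_num))
  have hw' : ∀ x, |-2 * v x * Real.exp (-2 * φ x)| ≤ 2 * Cv * Real.exp (2 * Cφ) := fun x => by
    rw [abs_mul, abs_mul, abs_neg, abs_two, mul_assoc, mul_assoc]
    exact mul_le_mul_of_nonneg_left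
      (mul_le_mul (hCv x) (hw x) (abs_nonneg _) ((abs_nonneg _).trans (hCv x))) two_pos.le
  have hM₀ : (Matrix.of fun i j => ∫ x, f i x * starRingEnd ℂ (f j x) *
      (Real.exp (-2 * (φ x + (0 : ℝ) * v x)) : ℂ) ∂μ) = 1 := by
    ext i j
    simpa [Matrix.one_apply] using horth i j
  have hentry := fun i j => hasDerivAt_integral_mul_exp_neg_two_mul
    (integrable_mul_conj_mul_ofReal_s9 (μ := μ) (hmeas i).aestronglyMeasurable
      (hmeas j).aestronglyMeasurable (by fun_prop) (hCf i) (hCf j) hw)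
    hvm.aestronglyMeasurable hCv
  refine ((Matrix.hasDerivAt_det_of_eq_one hentry hM₀).log_re_of_eq_one
    ((congrArg Matrix.det hM₀).trans Matrix.det_one)).congr_deriv ?_
  unfold Matrix.trace Matrix.diag
  rw [re_sum_integral_mul_conj_mul_ofReal _ fun k _ => integrable_mul_conj_mul_ofReal_s9
    (hmeas k).aestronglyMeasurable (hmeas k).aestronglyMeasurable (by fun_prop) (hCf k) (hCf k) hw',
    ← integral_const_mul]
  exact integral_congr_ae (.of_forall fun x => by ring)

/-- Differentiability of `t ↦ log det G(t)` at `t = 0` for the Gram matrices of a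
family orthonormal with respect to the weighted measure `e^{-2φ} μ`, with derivative
`-2 ∫ v ρ e^{-2φ} dμ`, where `ρ = ∑ |f i|²` is the Bergman distortion function. -/
theorem stmt_9 {X : Type*} [MeasurableSpace X] (μ : Measure X) [IsFiniteMeasure μ]
    (N : ℕ) (hN : 1 ≤ N)
    (φ v : X → ℝ) (hφm : Measurable φ) (hvm : Measurable v)
    (hφb : ∃ C, ∀ x, |φ x| ≤ C) (hvb : ∃ C, ∀ x, |v x| ≤ C)
    (f : Fin N → X → ℂ)
    (hmeas : ∀ i, Measurable (f i)) (hfb : ∀ i, ∃ C, ∀ x, ‖f i x‖ ≤ C)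
    (horth : ∀ i j, ∫ x, f i x * (starRingEnd ℂ) (f j x) * (Real.exp (-2 * φ x) : ℂ) ∂μ =
      if i = j then 1 else 0) :
    HasDerivAt (fun t : ℝ => Real.log ((Matrix.of fun i j =>
        ∫ x, f i x * (starRingEnd ℂ) (f j x) *
          (Real.exp (-2 * (φ x + t * v x)) : ℂ) ∂μ).det).re)
      (-2 * ∫ x, v x * (∑ i, ‖f i x‖ ^ 2) * Real.exp (-2 * φ x) ∂μ) 0 :=
  stmt_9_general μ N φ v hφm hvm hφb hvb f hmeas hfb horth
end

section
/- Let K be a compact topological space, N ≥ 2, and let f_1, …, f_N : K → ℂ be continuous functions such that no nontrivial complex linear combination of them vanishes identically on K. Let μ be a Borel probability measure on K such that f_1, …, f_N are linearly independent as elements of L²(μ). Then the Lebesgue measure on ℂ^N ≅ ℝ^{2N} of the L² unit ball B² = {a ∈ ℂ^N : ∫_K |∑_i a_i f_i|² dμ ≤ 1} is strictly greater than that of the sup-norm unit ball B^∞ = {a ∈ ℂ^N : sup_{x∈K} |∑_i a_i f_i(x)| ≤ 1}. -/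
/-!
Let `T a = ∑ i, a i • f i`, viewed in `C(K, ℂ)`. Pick `x₀` in the support of `μ`. Since
`N ≥ 2`, the functional `a ↦ T a x₀` has a nonzero kernel element `a`, and `T a ≠ 0`. The
continuous function `‖T a‖² - |T a|²` is nonnegative and positive near `x₀`, so it has positive
integral: `∫ |T a|² dμ < ‖T a‖²`. After rescaling, `a` lies in the open set
`{∫ |T a|² dμ < 1 < ‖T a‖}`, which is contained in `B² \ B^∞`. As `B^∞ ⊆ B²` and `B^∞` is
bounded (`T` is injective on a finite-dimensional space), this open set accounts for a strict
increase of volume.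
-/

open MeasureTheory Bornology Module Set

theorem measure_lt_measure_of_subset_diff {X : Type*} [MeasurableSpace X] (ν : Measure X)
    {A B U : Set X} (hAB : A ⊆ B) (hA : ν A ≠ ⊤) (hU : MeasurableSet U) (hU₀ : ν U ≠ 0)
    (hUB : U ⊆ B \ A) : ν A < ν B :=
  calc ν A < ν A + ν U := ENNReal.lt_add_right hA hU₀
    _ = ν (A ∪ U) := (measure_union (disjoint_sdiff_right.mono_right hUB) hU).symm
    _ ≤ ν B := measure_mono (union_subset hAB (hUB.trans sdiff_subset))

theorem LinearMap.isBounded_setOf_norm_le_one {𝕜 E F : Type*} [RCLike 𝕜]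
    [NormedAddCommGroup E] [NormedSpace 𝕜 E] [FiniteDimensional 𝕜 E]
    [NormedAddCommGroup F] [NormedSpace 𝕜 F] (T : E →ₗ[𝕜] F) (hT : Function.Injective T) :
    IsBounded {a | ‖T a‖ ≤ 1} := by
  obtain ⟨C, -, hC⟩ := T.injective_iff_antilipschitz.1 hT
  simpa [Set.preimage] using hC.isBounded_preimage (Metric.isBounded_closedBall (x := 0) (r := 1))

theorem MeasureTheory.Measure.nonempty_support_of_compactSpace {X : Type*} [TopologicalSpace X]
    [CompactSpace X] [MeasurableSpace X] {μ : Measure X} (hμ : μ ≠ 0) : μ.support.Nonempty := by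
  by_contra h
  refine hμ (measure_univ_eq_zero.1 (μ.measure_eq_zero_of_isCompact_subset_compl_support
    isCompact_univ ?_))
  simp [not_nonempty_iff_eq_empty.1 h]

theorem integral_lt_of_le_of_lt_of_mem_support {X : Type*} [TopologicalSpace X]
    [MeasurableSpace X] {μ : Measure X} [IsProbabilityMeasure μ] {g : X → ℝ}
    (hg : Continuous g) (hgi : Integrable g μ) {c : ℝ} (hle : ∀ x, g x ≤ c) {x₀ : X}
    (hx₀ : x₀ ∈ μ.support) (hlt : g x₀ < c) : ∫ x, g x ∂μ < c := by
  have hpos : 0 < μ (Function.support fun x => c - g x) :=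
    ((μ.mem_support_iff_forall x₀).1 hx₀ _ ((isOpen_lt hg continuous_const).mem_nhds hlt)).trans_le
      (measure_mono fun x hx => sub_ne_zero.2 (ne_of_gt hx))
  have hint : 0 < ∫ x, (c - g x) ∂μ := (integral_pos_iff_support_of_nonneg
    (fun x => sub_nonneg.2 (hle x)) ((integrable_const c).sub hgi)).2 hpos
  rw [integral_sub (integrable_const c) hgi] at hint
  simpa using hint

section

variable {K 𝕜 E : Type*} [TopologicalSpace K] [MeasurableSpace K] {μ : Measure K} [RCLike 𝕜]
  [NormedAddCommGroup E] [NormedSpace 𝕜 E]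

theorem integral_norm_sq_smul (T : E →ₗ[𝕜] C(K, 𝕜)) (c : 𝕜) (a : E) :
    ∫ x, ‖T (c • a) x‖ ^ 2 ∂μ = ‖c‖ ^ 2 * ∫ x, ‖T a x‖ ^ 2 ∂μ := by
  simp [mul_pow, integral_const_mul]

variable [CompactSpace K] [OpensMeasurableSpace K]

theorem ContinuousMap.integrable_norm_sq [IsFiniteMeasure μ] (g : C(K, 𝕜)) :
    Integrable (fun x => ‖g x‖ ^ 2) μ :=
  (by fun_prop : Continuous fun x => ‖g x‖ ^ 2).integrable_of_hasCompactSupport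
    (.of_compactSpace _)

theorem ContinuousMap.integral_norm_sq_le_norm_sq [IsProbabilityMeasure μ] (g : C(K, 𝕜)) :
    ∫ x, ‖g x‖ ^ 2 ∂μ ≤ ‖g‖ ^ 2 := by
  simpa using integral_mono g.integrable_norm_sq (integrable_const (μ := μ) (‖g‖ ^ 2))
    fun x => pow_le_pow_left₀ (norm_nonneg _) (g.norm_coe_le_norm x) 2

variable [FiniteDimensional 𝕜 E]

theorem continuous_integral_norm_sq [IsFiniteMeasure μ] (T : E →ₗ[𝕜] C(K, 𝕜)) :
    Continuous fun a => ∫ x, ‖T a x‖ ^ 2 ∂μ := by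
  have := FiniteDimensional.proper_rclike 𝕜 E
  have hT : Continuous T := T.continuous_of_finiteDimensional
  simpa using continuous_parametric_integral_of_continuous (μ := μ)
    (f := fun a x => ‖T a x‖ ^ 2) (by fun_prop) isCompact_univ

theorem exists_integral_norm_sq_lt_norm_sq [IsProbabilityMeasure μ] (T : E →ₗ[𝕜] C(K, 𝕜))
    (hT : Function.Injective T) (hE : 2 ≤ finrank 𝕜 E) :
    ∃ a, ∫ x, ‖T a x‖ ^ 2 ∂μ < ‖T a‖ ^ 2 := by
  obtain ⟨x₀, hx₀⟩ := μ.nonempty_support_of_compactSpace (IsProbabilityMeasure.ne_zero μ)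
  have hker : LinearMap.ker ((ContinuousMap.evalCLM 𝕜 x₀).toLinearMap ∘ₗ T) ≠ ⊥ :=
    LinearMap.ker_ne_bot_of_finrank_lt (by simp; omega)
  obtain ⟨a, hax₀ : T a x₀ = 0, ha⟩ := Submodule.exists_mem_ne_zero_of_ne_bot hker
  have hTa : T a ≠ 0 := (map_ne_zero_iff T hT).2 ha
  refine ⟨a, integral_lt_of_le_of_lt_of_mem_support (by fun_prop) (T a).integrable_norm_sq
    (fun x => pow_le_pow_left₀ (norm_nonneg _) ((T a).norm_coe_le_norm x) 2) hx₀ ?_⟩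
  simpa [hax₀] using pow_pos (norm_pos_iff.2 hTa) 2

theorem exists_integral_norm_sq_lt_one_lt_norm [IsProbabilityMeasure μ] (T : E →ₗ[𝕜] C(K, 𝕜))
    (hT : Function.Injective T) (hE : 2 ≤ finrank 𝕜 E) :
    ∃ a, ∫ x, ‖T a x‖ ^ 2 ∂μ < 1 ∧ 1 < ‖T a‖ := by
  obtain ⟨a, ha⟩ := exists_integral_norm_sq_lt_norm_sq (μ := μ) T hT hE
  set q := ∫ x, ‖T a x‖ ^ 2 ∂μ
  have hq : 0 ≤ q := integral_nonneg fun x => by positivity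
  have hsum : 0 < q + ‖T a‖ ^ 2 := by linarith
  -- `t⁻²` is the mean of `q` and `‖T a‖²`, so scaling by `t` puts `1` strictly between them.
  set t := √(2 / (q + ‖T a‖ ^ 2))
  have ht : t ^ 2 = 2 / (q + ‖T a‖ ^ 2) := Real.sq_sqrt (by positivity)
  refine ⟨(t : 𝕜) • a, ?_, ?_⟩
  · rw [integral_norm_sq_smul, RCLike.norm_ofReal, sq_abs, ht, div_mul_eq_mul_div,
      div_lt_one hsum]
    linarith
  · rw [map_smul, norm_smul, RCLike.norm_ofReal, abs_of_nonneg (Real.sqrt_nonneg _)]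
    refine lt_of_pow_lt_pow_left₀ 2 (by positivity) ?_
    rw [mul_pow, ht, div_mul_eq_mul_div, one_pow, one_lt_div hsum]
    linarith

theorem measure_setOf_norm_le_one_lt [IsProbabilityMeasure μ] [MeasurableSpace E] [BorelSpace E]
    (ν : Measure E) [ν.IsOpenPosMeasure] [IsFiniteMeasureOnCompacts ν] (T : E →ₗ[𝕜] C(K, 𝕜))
    (hT : Function.Injective T) (hE : 2 ≤ finrank 𝕜 E) :
    ν {a | ‖T a‖ ≤ 1} < ν {a | ∫ x, ‖T a x‖ ^ 2 ∂μ ≤ 1} := by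
  have := FiniteDimensional.proper_rclike 𝕜 E
  obtain ⟨a, haQ, haT⟩ := exists_integral_norm_sq_lt_one_lt_norm (μ := μ) T hT hE
  have hU : IsOpen ({a | ∫ x, ‖T a x‖ ^ 2 ∂μ < 1} ∩ {a | 1 < ‖T a‖}) :=
    (isOpen_lt (continuous_integral_norm_sq T) continuous_const).inter
      (isOpen_lt continuous_const T.continuous_of_finiteDimensional.norm)
  refine measure_lt_measure_of_subset_diff ν
    (fun b hb => (T b).integral_norm_sq_le_norm_sq.trans (pow_le_one₀ (norm_nonneg _) hb))
    (T.isBounded_setOf_norm_le_one hT).measure_lt_top.ne hU.measurableSet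
    (hU.measure_ne_zero ν ⟨a, haQ, haT⟩) ?_
  rintro b ⟨hbQ : _ < (1 : ℝ), hbT : 1 < ‖T b‖⟩
  exact ⟨hbQ.le, hbT.not_ge⟩

end

theorem stmt_13_general {K : Type*} [TopologicalSpace K] [CompactSpace K]
    [MeasurableSpace K] [BorelSpace K]
    (N : ℕ) (hN : 2 ≤ N) (f : Fin N → K → ℂ) (hcont : ∀ i, Continuous (f i))
    (hind : ∀ a : Fin N → ℂ, (∀ x, ∑ i, a i * f i x = 0) → a = 0)
    (μ : Measure K) [IsProbabilityMeasure μ] :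
    volume {a : Fin N → ℂ | ∀ x, ‖∑ i, a i * f i x‖ ≤ 1} <
      volume {a : Fin N → ℂ | ∫ x, ‖∑ i, a i * f i x‖ ^ 2 ∂μ ≤ 1} := by
  let T : (Fin N → ℂ) →ₗ[ℂ] C(K, ℂ) := Fintype.linearCombination ℂ fun i => ⟨f i, hcont i⟩
  have hT : ∀ a x, T a x = ∑ i, a i * f i x := fun a x => by
    simp [T, Fintype.linearCombination_apply]
  have hTinj : Function.Injective T := (injective_iff_map_eq_zero T).2 fun a ha =>
    hind a fun x => by rw [← hT, ha, ContinuousMap.zero_apply]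
  have hsup : {a : Fin N → ℂ | ∀ x, ‖∑ i, a i * f i x‖ ≤ 1} = {a | ‖T a‖ ≤ 1} := by
    ext a
    simp [ContinuousMap.norm_le _ zero_le_one, hT]
  simp_rw [hsup, ← hT]
  exact measure_setOf_norm_le_one_lt volume T hTinj (by simpa using hN)

/-- For `N ≥ 2`, the Lebesgue volume (on `ℂ^N ≅ ℝ^{2N}`) of the `L²(μ)` unit ball
of the span of `f₁,…,f_N` (in coordinates) is strictly greater than that of the
sup-norm unit ball. -/
theorem stmt_13 {K : Type*} [TopologicalSpace K] [CompactSpace K]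
    [MeasurableSpace K] [BorelSpace K]
    (N : ℕ) (hN : 2 ≤ N) (f : Fin N → K → ℂ) (hcont : ∀ i, Continuous (f i))
    (hind : ∀ a : Fin N → ℂ, (∀ x, ∑ i, a i * f i x = 0) → a = 0)
    (μ : Measure K) [IsProbabilityMeasure μ]
    (hindL2 : ∀ a : Fin N → ℂ, (∀ᵐ x ∂μ, ∑ i, a i * f i x = 0) → a = 0) :
    volume {a : Fin N → ℂ | ∀ x, ‖∑ i, a i * f i x‖ ≤ 1} <
      volume {a : Fin N → ℂ | ∫ x, ‖∑ i, a i * f i x‖ ^ 2 ∂μ ≤ 1} :=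
  stmt_13_general N hN f hcont hind μ
end

section
/- Let X be a set, K ⊆ X, N ≥ 1, and let f_1, …, f_N : X → ℂ be functions. Let p_1, …, p_N ∈ K and C ≥ 0 be such that for every s in the complex linear span of f_1, …, f_N, sup_{x∈K} |s(x)| ≤ C · max_{1≤j≤N} |s(p_j)|. Then for every (q_1, …, q_N) ∈ K^N, |det(f_i(q_j))_{1≤i,j≤N}| ≤ C^N · |det(f_i(p_j))_{1≤i,j≤N}|. -/
/-!
The determinant `D(q) = det (f_i(q_j))` is, as a function of a single point `q_m`, a linear
combination of the `f_i` (Cramer's rule), so the distortion hypothesis bounds `|D(q)|` by `C`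
times the largest `|D|` obtained by moving `q_m` to one of the nodes `p_j`. Doing this for every
coordinate in turn costs `C^N` and ends at configurations made only of nodes, where `D` is either
`± D(p)` or zero.
-/

open Finset Function

section

variable {ι X R : Type*}

def evalMatrix (f : ι → X → R) (q : ι → X) : Matrix ι ι R :=
  Matrix.of fun i j => f i (q j)

lemma evalMatrix_update [DecidableEq ι] (f : ι → X → R) (q : ι → X) (m : ι) (x : X) :
    evalMatrix f (update q m x) = (evalMatrix f q).updateCol m fun i => f i x := by
  ext i j
  rcases eq_or_ne j m with rfl | hj
  · simp [evalMatrix]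
  · simp [evalMatrix, hj]

lemma evalMatrix_comp (f : ι → X → R) (p : ι → X) (σ : ι → ι) :
    evalMatrix f (p ∘ σ) = (evalMatrix f p).submatrix id σ :=
  rfl

variable [Fintype ι] [DecidableEq ι]

lemma linearMap_comp_eval_mem_span [CommSemiring R] (f : ι → X → R) (L : (ι → R) →ₗ[R] R) :
    (fun x => L fun i => f i x) ∈ Submodule.span R (Set.range f) := by
  have hL : (fun x => L fun i => f i x) = ∑ i, L (fun j => if i = j then 1 else 0) • f i := by
    ext x
    simp only [L.pi_apply_eq_sum_univ (fun i => f i x), Finset.sum_apply, Pi.smul_apply,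
      smul_eq_mul, mul_comm]
  rw [hL]
  exact Submodule.sum_mem _ fun i _ => Submodule.smul_mem _ _ (Submodule.subset_span ⟨i, rfl⟩)

lemma det_evalMatrix_update_mem_span [CommRing R] (f : ι → X → R) (q : ι → X) (m : ι) :
    (fun x => (evalMatrix f (update q m x)).det) ∈ Submodule.span R (Set.range f) := by
  simp only [evalMatrix_update, ← Matrix.cramer_apply]
  exact linearMap_comp_eval_mem_span f ((LinearMap.proj m).comp (evalMatrix f q).cramer)

lemma norm_det_submatrix_id_le [SeminormedCommRing R] (M : Matrix ι ι R) (σ : ι → ι) :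
    ‖(M.submatrix id σ).det‖ ≤ ‖M.det‖ := by
  by_cases hσ : Injective σ
  · obtain ⟨e, rfl⟩ : ∃ e : Equiv.Perm ι, ⇑e = σ := ⟨.ofBijective σ hσ.bijective_of_finite, rfl⟩
    rw [Matrix.det_permute']
    rcases Int.units_eq_one_or (Equiv.Perm.sign e) with h | h <;> simp [h]
  · obtain ⟨a, b, hab, hne⟩ := not_injective_iff.mp hσ
    rw [Matrix.det_zero_of_column_eq hne fun k => by simp [hab], norm_zero]
    exact norm_nonneg _

variable [Nonempty ι] [SeminormedCommRing R]

theorem norm_det_evalMatrix_le_of_distortion (K : Set X) (f : ι → X → R) (p : ι → X)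
    (hp : ∀ j, p j ∈ K) (C : ℝ) (hC : 0 ≤ C)
    (hdist : ∀ s ∈ Submodule.span R (Set.range f), ∀ x ∈ K,
      ‖s x‖ ≤ C * univ.sup' univ_nonempty fun j => ‖s (p j)‖)
    (S : Finset ι) (q : ι → X) (hqK : ∀ j, q j ∈ K) (hqp : ∀ j ∉ S, q j ∈ Set.range p) :
    ‖(evalMatrix f q).det‖ ≤ C ^ #S * ‖(evalMatrix f p).det‖ := by
  induction S using Finset.induction_on generalizing q with
  | empty =>
    choose σ hσ using fun j => hqp j (notMem_empty j)
    obtain rfl : p ∘ σ = q := funext hσ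
    rw [card_empty, pow_zero, one_mul, evalMatrix_comp]
    exact norm_det_submatrix_id_le _ σ
  | insert m S hm ih =>
    set s := fun x => (evalMatrix f (update q m x)).det
    have hs_nodes : ∀ j, ‖s (p j)‖ ≤ C ^ #S * ‖(evalMatrix f p).det‖ := fun j => by
      refine ih _ ((forall_update_iff q fun _ y => y ∈ K).mpr ⟨hp j, fun j' _ => hqK j'⟩) ?_
      refine (forall_update_iff q fun j' y => j' ∉ S → y ∈ Set.range p).mpr
        ⟨fun _ => ⟨j, rfl⟩, fun j' hj'm hj'S => hqp j' ?_⟩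
      simp [hj'm, hj'S]
    calc ‖(evalMatrix f q).det‖ = ‖s (q m)‖ := by simp only [s, update_eq_self]
      _ ≤ C * univ.sup' univ_nonempty fun j => ‖s (p j)‖ :=
        hdist s (det_evalMatrix_update_mem_span f q m) (q m) (hqK m)
      _ ≤ C * (C ^ #S * ‖(evalMatrix f p).det‖) :=
        mul_le_mul_of_nonneg_left (sup'_le _ _ fun j _ => hs_nodes j) hC
      _ = C ^ #(insert m S) * ‖(evalMatrix f p).det‖ := by
        rw [card_insert_of_notMem hm, pow_succ', mul_assoc]

end

/-- If the sup norm on `K` of every element `s` of the span of `f₁,…,f_N` is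
bounded by `C · max_j |s(p_j)|`, then the modulus of the Vandermonde-type
determinant at any configuration in `K` is at most `C^N` times its modulus at
`P = (p₁,…,p_N)`. -/
theorem stmt_15 {X : Type*} (K : Set X) (N : ℕ) (hN : 1 ≤ N)
    (f : Fin N → X → ℂ) (p : Fin N → X) (hp : ∀ j, p j ∈ K)
    (C : ℝ) (hC : 0 ≤ C)
    (hdist : ∀ s ∈ Submodule.span ℂ (Set.range f), ∀ x ∈ K,
      ‖s x‖ ≤ C * Finset.univ.sup'
        (Finset.univ_nonempty_iff.mpr ⟨⟨0, hN⟩⟩) fun j => ‖s (p j)‖) :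
    ∀ q : Fin N → X, (∀ j, q j ∈ K) →
      ‖(Matrix.of fun i j => f i (q j)).det‖ ≤
        C ^ N * ‖(Matrix.of fun i j => f i (p j)).det‖ := by
  intro q hqK
  have : Nonempty (Fin N) := ⟨⟨0, hN⟩⟩
  have h := norm_det_evalMatrix_le_of_distortion K f p hp C hC hdist univ q hqK
    fun j hj => absurd (mem_univ j) hj
  rwa [card_univ, Fintype.card_fin] at h
end
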